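/- Under Assumption SCD*, there exists a bundle b ∈ B that is a strict best response, i.e., there exists t ∈ T such that φ(b,t) > φ(b',t) for every bundle b' ≠ b. -/
import Mathlib


namespace Paper

abbrev Bundle (n : ℕ) := Finset (Fin n)

variable {n : ℕ}

/-- A stochastic bundle: nonnegative weights on bundles summing to one. -/
def IsStoch (a : Bundle n → ℝ) : Prop :=
  (∀ b, 0 ≤ a b) ∧ ∑ b, a b = 1

/-- The point mass at a bundle, viewed as a stochastic bundle. -/
def pt (b : Bundle n) : Bundle n → ℝ := fun b' => if b' = b then 1 else 0

/-- Virtual value of a stochastic bundle (linear extension). -/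
def phiA (φ : Bundle n → ℝ → ℝ) (a : Bundle n → ℝ) (t : ℝ) : ℝ :=
  ∑ b, a b * φ b t

/-- A function is single-crossing on a set: its sign is monotone there. -/
def SingleCrossingOn (g : ℝ → ℝ) (T : Set ℝ) : Prop :=
  MonotoneOn (fun t => Real.sign (g t)) T ∨ AntitoneOn (fun t => Real.sign (g t)) T

/-- Assumption SCD*: differences of virtual values of stochastic bundles are
single-crossing in the type. -/
def SCDstar (φ : Bundle n → ℝ → ℝ) (t0 t1 : ℝ) : Prop :=
  ∀ a a' : Bundle n → ℝ, IsStoch a → IsStoch a' →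
    SingleCrossingOn (fun t => phiA φ a t - phiA φ a' t) (Set.Icc t0 t1)

/-- Assumption MD: differences of virtual values of deterministic bundles are
monotone in the type. -/
def MD (φ : Bundle n → ℝ → ℝ) (t0 t1 : ℝ) : Prop :=
  ∀ b b' : Bundle n,
    MonotoneOn (fun t => φ b t - φ b' t) (Set.Icc t0 t1) ∨
    AntitoneOn (fun t => φ b t - φ b' t) (Set.Icc t0 t1)

/-- No two distinct bundles have identical virtual value functions on T. -/
def Distinct (φ : Bundle n → ℝ → ℝ) (t0 t1 : ℝ) : Prop :=
  ∀ b b' : Bundle n, b ≠ b' → ∃ t ∈ Set.Icc t0 t1, φ b t ≠ φ b' t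

/-- A stochastic bundle is very weakly dominated. -/
def VWD (φ : Bundle n → ℝ → ℝ) (t0 t1 : ℝ) (a : Bundle n → ℝ) : Prop :=
  ∃ a' : Bundle n → ℝ, IsStoch a' ∧ a' ≠ a ∧
    ∀ t ∈ Set.Icc t0 t1, phiA φ a t ≤ phiA φ a' t

/-- A bundle is a never strict best response. -/
def NeverStrictBR (φ : Bundle n → ℝ → ℝ) (t0 t1 : ℝ) (b : Bundle n) : Prop :=
  ∀ t ∈ Set.Icc t0 t1, ∃ b' : Bundle n, b' ≠ b ∧ φ b t ≤ φ b' t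

/-- A menu is optimal if at every type some element attains the upper envelope. -/
def OptimalMenu (φ : Bundle n → ℝ → ℝ) (t0 t1 : ℝ) (S : Finset (Bundle n)) : Prop :=
  ∀ t ∈ Set.Icc t0 t1, ∃ b ∈ S, ∀ b' : Bundle n, φ b' t ≤ φ b t

/-- A minimal optimal menu. -/
def MinimalOptimalMenu (φ : Bundle n → ℝ → ℝ) (t0 t1 : ℝ) (S : Finset (Bundle n)) : Prop :=
  OptimalMenu φ t0 t1 S ∧ ∀ S' : Finset (Bundle n), S' ⊂ S → ¬ OptimalMenu φ t0 t1 S'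

/-- A nested menu: any two elements are comparable under set inclusion. -/
def IsNestedMenu (S : Finset (Bundle n)) : Prop :=
  ∀ b1 ∈ S, ∀ b2 ∈ S, b1 ⊆ b2 ∨ b2 ⊆ b1

/-- A tree menu: a nonempty root contained in every nonempty element, and two
incomparable elements. -/
def IsTreeMenu (S : Finset (Bundle n)) : Prop :=
  (∃ r ∈ S, r ≠ (∅ : Bundle n) ∧ ∀ b ∈ S, b ≠ (∅ : Bundle n) → r ⊆ b) ∧
  (∃ b1 ∈ S, ∃ b2 ∈ S, ¬ b1 ⊆ b2 ∧ ¬ b2 ⊆ b1)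

/-! ### Auxiliary lemmas for the proof of Corollary 1 -/

private lemma sign_nonneg_of {x : ℝ} (h : 0 ≤ x) : 0 ≤ Real.sign x := by
  rcases h.lt_or_eq with h' | h'
  · rw [Real.sign_of_pos h']; norm_num
  · rw [← h', Real.sign_zero]

private lemma sign_nonpos_of {x : ℝ} (h : x ≤ 0) : Real.sign x ≤ 0 := by
  rcases h.lt_or_eq with h' | h'
  · rw [Real.sign_of_neg h']; norm_num
  · rw [h', Real.sign_zero]

/-- No single-crossing function can be positive, then nonpositive, then positive. -/
private lemma lemA {g : ℝ → ℝ} {T : Set ℝ} (h : SingleCrossingOn g T) {x y z : ℝ}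
    (hx : x ∈ T) (hy : y ∈ T) (hz : z ∈ T) (hxy : x ≤ y) (hyz : y ≤ z)
    (h1 : 0 < g x) (h2 : g y ≤ 0) (h3 : 0 < g z) : False := by
  rcases h with h | h
  · have hm := h hx hy hxy
    simp only [Real.sign_of_pos h1] at hm
    have := sign_nonpos_of h2
    linarith
  · have hm := h hy hz hyz
    simp only [Real.sign_of_pos h3] at hm
    have := sign_nonpos_of h2
    linarith

/-- No single-crossing function can be nonpositive, then positive, then nonpositive. -/
private lemma lemB {g : ℝ → ℝ} {T : Set ℝ} (h : SingleCrossingOn g T) {x y z : ℝ}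
    (hx : x ∈ T) (hy : y ∈ T) (hz : z ∈ T) (hxy : x ≤ y) (hyz : y ≤ z)
    (h1 : g x ≤ 0) (h2 : 0 < g y) (h3 : g z ≤ 0) : False := by
  rcases h with h | h
  · have hm := h hy hz hyz
    simp only [Real.sign_of_pos h2] at hm
    have := sign_nonpos_of h3
    linarith
  · have hm := h hx hy hxy
    simp only [Real.sign_of_pos h2] at hm
    have := sign_nonpos_of h1
    linarith

/-- No single-crossing function can be nonnegative, then negative, then nonnegative. -/
private lemma lemC {g : ℝ → ℝ} {T : Set ℝ} (h : SingleCrossingOn g T) {x y z : ℝ}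
    (hx : x ∈ T) (hy : y ∈ T) (hz : z ∈ T) (hxy : x ≤ y) (hyz : y ≤ z)
    (h1 : 0 ≤ g x) (h2 : g y < 0) (h3 : 0 ≤ g z) : False := by
  rcases h with h | h
  · have hm := h hx hy hxy
    simp only [Real.sign_of_neg h2] at hm
    have := sign_nonneg_of h1
    linarith
  · have hm := h hy hz hyz
    simp only [Real.sign_of_neg h2] at hm
    have := sign_nonneg_of h3
    linarith

private lemma pt_nonneg (b b' : Bundle n) : 0 ≤ pt b b' := by
  unfold pt; split <;> norm_num

private lemma pt_sum (b : Bundle n) : ∑ b', pt b b' = 1 := by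
  simp [pt]

private lemma isStoch_pt (b : Bundle n) : IsStoch (pt b) :=
  ⟨fun b' => pt_nonneg b b', pt_sum b⟩

private lemma phiA_pt (φ : Bundle n → ℝ → ℝ) (b : Bundle n) (t : ℝ) :
    phiA φ (pt b) t = φ b t := by
  simp [phiA, pt, ite_mul]

private lemma phiA_mix (φ : Bundle n → ℝ → ℝ) (c₁ c₂ : ℝ) (g₀ g₁ : Bundle n) (t : ℝ) :
    phiA φ (fun b => c₁ * pt g₀ b + c₂ * pt g₁ b) t = c₁ * φ g₀ t + c₂ * φ g₁ t := by
  have h : ∀ b : Bundle n, (c₁ * pt g₀ b + c₂ * pt g₁ b) * φ b t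
      = c₁ * (pt g₀ b * φ b t) + c₂ * (pt g₁ b * φ b t) := fun b => by ring
  unfold phiA
  simp_rw [h]
  rw [Finset.sum_add_distrib, ← Finset.mul_sum, ← Finset.mul_sum]
  have h0 : ∑ b, pt g₀ b * φ b t = φ g₀ t := by simp [pt, ite_mul]
  have h1 : ∑ b, pt g₁ b * φ b t = φ g₁ t := by simp [pt, ite_mul]
  rw [h0, h1]

private lemma sc_pair {t0 t1 : ℝ} {φ : Bundle n → ℝ → ℝ} (hscd : SCDstar φ t0 t1)
    (b b' : Bundle n) :
    SingleCrossingOn (fun t => φ b t - φ b' t) (Set.Icc t0 t1) := by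
  have h := hscd (pt b) (pt b') (isStoch_pt b) (isStoch_pt b')
  simpa only [phiA_pt] using h

private lemma exists_strict_aux {n : ℕ} {t0 t1 : ℝ} (ht : t0 ≤ t1)
    {φ : Bundle n → ℝ → ℝ}
    (hcont : ∀ b : Bundle n, ContinuousOn (φ b) (Set.Icc t0 t1))
    (hdist : Distinct φ t0 t1)
    (hscd : SCDstar φ t0 t1) :
    ∀ (k : ℕ) (S : Finset (Bundle n)), S.card ≤ k → S.Nonempty →
      ∃ b ∈ S, ∃ t ∈ Set.Icc t0 t1, ∀ b' ∈ S, b' ≠ b → φ b' t < φ b t := by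
  intro k
  induction k with
  | zero =>
    intro S hcard hne
    rw [Nat.le_zero, Finset.card_eq_zero] at hcard
    subst hcard
    exact absurd hne (by simp)
  | succ k ih =>
    intro S hcard hne
    classical
    have ht1I : t1 ∈ Set.Icc t0 t1 := Set.right_mem_Icc.mpr ht
    have ht0I : t0 ∈ Set.Icc t0 t1 := Set.left_mem_Icc.mpr ht
    obtain ⟨b₁, hb₁S, hb₁max⟩ := S.exists_max_image (fun b => φ b t1) hne
    set A₁ := S.filter (fun b => φ b t1 = φ b₁ t1) with hA₁
    have hb₁A : b₁ ∈ A₁ := Finset.mem_filter.mpr ⟨hb₁S, rfl⟩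
    obtain ⟨bs, hbsA, hbsmax⟩ := A₁.exists_max_image (fun b => φ b t0) ⟨b₁, hb₁A⟩
    have hbsS : bs ∈ S := (Finset.mem_filter.mp hbsA).1
    have hbst1 : φ bs t1 = φ b₁ t1 := (Finset.mem_filter.mp hbsA).2
    have hmax1 : ∀ b' ∈ S, φ b' t1 ≤ φ bs t1 := fun b' hb' => hbst1 ▸ hb₁max b' hb'
    by_cases hc : ∀ b' ∈ S, b' ≠ bs → φ b' t1 < φ bs t1
    · exact ⟨bs, hbsS, t1, ht1I, hc⟩
    push_neg at hc
    obtain ⟨g₀, hg₀S, hg₀ne, hg₀ge⟩ := hc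
    have heq : φ g₀ t1 = φ bs t1 := le_antisymm (hmax1 _ hg₀S) hg₀ge
    have hg₀A : g₀ ∈ A₁ := Finset.mem_filter.mpr ⟨hg₀S, heq.trans hbst1⟩
    have ht0le : φ g₀ t0 ≤ φ bs t0 := hbsmax g₀ hg₀A
    -- the difference `e` between the top element and its tie-partner at `t1`
    set e : ℝ → ℝ := fun x => φ bs x - φ g₀ x with he
    clear_value e
    have he_app : ∀ x, e x = φ bs x - φ g₀ x := fun x => by rw [he]
    have hesc : SingleCrossingOn e (Set.Icc t0 t1) := by
      rw [he]; exact sc_pair hscd bs g₀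
    have het1 : e t1 = 0 := by rw [he_app t1, heq, sub_self]
    have henn : ∀ x ∈ Set.Icc t0 t1, 0 ≤ e x := by
      intro x hx
      by_contra hlt
      push_neg at hlt
      refine lemC hesc ht0I hx ht1I hx.1 hx.2 ?_ hlt het1.ge
      rw [he_app t0]; linarith
    obtain ⟨s₀, hs₀I, hs₀ne⟩ := hdist bs g₀ (Ne.symm hg₀ne)
    have hs₀pos : 0 < e s₀ := by
      refine (henn s₀ hs₀I).lt_of_ne (Ne.symm ?_)
      rw [he_app s₀]
      exact sub_ne_zero.mpr hs₀ne
    -- `v` : the first zero of `e`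
    set Z : Set ℝ := {x | x ∈ Set.Icc t0 t1 ∧ e x = 0} with hZ
    clear_value Z
    have hZmem : ∀ x, x ∈ Z ↔ x ∈ Set.Icc t0 t1 ∧ e x = 0 := fun x => by rw [hZ]; rfl
    have hZt1 : t1 ∈ Z := (hZmem t1).mpr ⟨ht1I, het1⟩
    have hZbdd : BddBelow Z := ⟨t0, fun x hx => ((hZmem x).mp hx).1.1⟩
    have hZclosed : IsClosed Z := by
      have hcont' : ContinuousOn e (Set.Icc t0 t1) := by
        rw [he]; exact (hcont bs).sub (hcont g₀)
      have hZeq : Z = Set.Icc t0 t1 ∩ e ⁻¹' {0} := by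
        ext x; rw [hZmem x]; simp
      rw [hZeq]
      exact hcont'.preimage_isClosed_of_isClosed isClosed_Icc isClosed_singleton
    set v := sInf Z with hv
    clear_value v
    have hvZ : v ∈ Z := by rw [hv]; exact hZclosed.csInf_mem ⟨t1, hZt1⟩ hZbdd
    have hvI : v ∈ Set.Icc t0 t1 := ((hZmem v).mp hvZ).1
    have hev : e v = 0 := ((hZmem v).mp hvZ).2
    have hZgt : ∀ z ∈ Z, s₀ < z := by
      intro z hz
      by_contra hle
      push_neg at hle
      obtain ⟨hzI, hze⟩ := (hZmem z).mp hz
      exact lemB hesc hzI hs₀I ht1I hle hs₀I.2 hze.le hs₀pos het1.le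
    have ht0v : t0 < v := lt_of_le_of_lt hs₀I.1 (hZgt v hvZ)
    have hepos : ∀ x ∈ Set.Icc t0 t1, x < v → 0 < e x := by
      intro x hx hxv
      rcases (henn x hx).lt_or_eq with h | h
      · exact h
      · have hle := csInf_le hZbdd ((hZmem x).mpr ⟨hx, h.symm⟩)
        rw [← hv] at hle
        exact absurd hle (not_le.mpr hxv)
    -- inductive step on `S.erase g₀`
    have hS'ne : (S.erase g₀).Nonempty := ⟨bs, Finset.mem_erase.mpr ⟨Ne.symm hg₀ne, hbsS⟩⟩
    have hS'card : (S.erase g₀).card ≤ k := by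
      rw [Finset.card_erase_of_mem hg₀S]
      omega
    obtain ⟨f, hfS', t', ht'I, hwin⟩ := ih (S.erase g₀) hS'card hS'ne
    by_cases hfb : f = bs
    case neg =>
      refine ⟨f, Finset.mem_of_mem_erase hfS', t', ht'I, ?_⟩
      intro b' hb'S hb'ne
      by_cases hb'g : b' = g₀
      · subst hb'g
        have h1 : φ b' t' ≤ φ bs t' := by
          have := henn t' ht'I
          rw [he_app t'] at this
          linarith
        have h2 : φ bs t' < φ f t' :=
          hwin bs (Finset.mem_erase.mpr ⟨Ne.symm hg₀ne, hbsS⟩) (fun h => hfb h.symm)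
        exact lt_of_le_of_lt h1 h2
      · exact hwin b' (Finset.mem_erase.mpr ⟨hb'g, hb'S⟩) hb'ne
    case pos =>
      subst hfb
      by_cases hets : 0 < e t'
      · refine ⟨f, hbsS, t', ht'I, ?_⟩
        intro b' hb'S hb'ne
        by_cases hb'g : b' = g₀
        · subst hb'g
          rw [he_app t'] at hets
          linarith
        · exact hwin b' (Finset.mem_erase.mpr ⟨hb'g, hb'S⟩) hb'ne
      · -- the hard case: the induction winner is `bs` and it still ties `g₀` at `t'`
        have hets0 : e t' = 0 := le_antisymm (not_lt.mp hets) (henn t' ht'I)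
        have hvt' : v ≤ t' := by
          rw [hv]; exact csInf_le hZbdd ((hZmem t').mpr ⟨ht'I, hets0⟩)
        by_contra hng
        push_neg at hng
        have blocker : ∀ w ∈ Set.Icc t0 t1, w < v →
            ∃ g, g ∈ S ∧ g ≠ f ∧ g ≠ g₀ ∧ φ f w ≤ φ g w := by
          intro w hwI hwv
          obtain ⟨g, hgS, hgne, hgle⟩ := hng f hbsS w hwI
          refine ⟨g, hgS, hgne, ?_, hgle⟩
          rintro rfl
          have hew := hepos w hwI hwv
          rw [he_app w] at hew
          linarith
        set G := (S.erase g₀).erase f with hG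
        obtain ⟨gw, hgwS, hgwf, hgwg₀, hgwle⟩ := blocker t0 ht0I ht0v
        have hGne : G.Nonempty :=
          ⟨gw, Finset.mem_erase.mpr ⟨hgwf, Finset.mem_erase.mpr ⟨hgwg₀, hgwS⟩⟩⟩
        -- pigeonhole: one blocker works arbitrarily close to `v`
        have hpig : ∃ g₁, g₁ ∈ G ∧ ∀ x, x ∈ Set.Icc t0 t1 → x < v →
            ∃ w, w ∈ Set.Icc t0 t1 ∧ x ≤ w ∧ w < v ∧ φ f w ≤ φ g₁ w := by
          by_contra hP
          push_neg at hP
          have hP' : ∀ g, ∃ x, x ∈ Set.Icc t0 t1 ∧ x < v ∧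
              (g ∈ G → ∀ w, w ∈ Set.Icc t0 t1 → x ≤ w → w < v → φ g w < φ f w) := by
            intro g
            by_cases hg : g ∈ G
            · obtain ⟨x, hx1, hx2, hx3⟩ := hP g hg
              exact ⟨x, hx1, hx2, fun _ => hx3⟩
            · exact ⟨t0, ht0I, ht0v, fun h => absurd h hg⟩
          choose xg hxgI hxgv hxgP using hP'
          obtain ⟨gm, hgmG, hmax⟩ := G.exists_max_image xg hGne
          obtain ⟨g', hg'S, hg'f, hg'g₀, hg'le⟩ := blocker (xg gm) (hxgI gm) (hxgv gm)
          have hg'G : g' ∈ G :=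
            Finset.mem_erase.mpr ⟨hg'f, Finset.mem_erase.mpr ⟨hg'g₀, hg'S⟩⟩
          have := hxgP g' hg'G (xg gm) (hxgI gm) (hmax g' hg'G) (hxgv gm)
          linarith
        obtain ⟨g₁, hg₁G, hQ⟩ := hpig
        have hg₁S' : g₁ ∈ S.erase g₀ := Finset.mem_of_mem_erase hg₁G
        have hg₁f : g₁ ≠ f := (Finset.mem_erase.mp hg₁G).1
        set d : ℝ → ℝ := fun x => φ f x - φ g₁ x with hd
        clear_value d
        have hd_app : ∀ x, d x = φ f x - φ g₁ x := fun x => by rw [hd]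
        have hdsc : SingleCrossingOn d (Set.Icc t0 t1) := by
          rw [hd]; exact sc_pair hscd f g₁
        have hdts : 0 < d t' := by
          rw [hd_app t']
          have := hwin g₁ hg₁S' hg₁f
          linarith
        have hdle : ∀ x ∈ Set.Icc t0 t1, x < v → d x ≤ 0 := by
          intro x hx hxv
          by_contra hpos
          push_neg at hpos
          obtain ⟨w, hwI, hxw, hwv, hwle⟩ := hQ x hx hxv
          refine lemA hdsc hx hwI ht'I hxw (le_trans hwv.le hvt') hpos ?_ hdts
          rw [hd_app w]
          linarith
        have hdv : d v ≤ 0 := by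
          have hmono : Set.Ico t0 v ⊆ Set.Icc t0 t1 := fun x hx => ⟨hx.1, le_trans hx.2.le hvI.2⟩
          have hcd : ContinuousOn d (Set.Icc t0 t1) := by
            rw [hd]; exact (hcont f).sub (hcont g₁)
          have hct : ContinuousWithinAt d (Set.Ico t0 v) v :=
            (hcd.continuousWithinAt hvI).mono hmono
          have hne' : (nhdsWithin v (Set.Ico t0 v)).NeBot := by
            rw [← mem_closure_iff_nhdsWithin_neBot, closure_Ico (ne_of_lt ht0v)]
            exact ⟨ht0v.le, le_refl v⟩
          exact le_of_tendsto hct (eventually_nhdsWithin_of_forall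
            (fun x hx => hdle x (hmono hx) hx.2))
        have hvt'' : v < t' :=
          lt_of_le_of_ne hvt' (fun h => absurd hdts (not_lt.mpr (h ▸ hdv)))
        have hdt0 : d t0 ≤ 0 := hdle t0 ht0I ht0v
        have het0 : 0 < e t0 := hepos t0 ht0I ht0v
        have hden : 0 < e t0 - d t0 := by linarith
        set ε : ℝ := e t0 / (2 * (e t0 - d t0)) with hε
        clear_value ε
        have hε0 : 0 < ε := by rw [hε]; exact div_pos het0 (by linarith)
        have hε1 : ε ≤ 1 / 2 := by
          rw [hε, div_le_iff₀ (by linarith : (0:ℝ) < 2 * (e t0 - d t0))]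
          linarith
        have hεd : ε * (e t0 - d t0) = e t0 / 2 := by
          rw [hε]
          field_simp
        set a' : Bundle n → ℝ := fun b => (1 - ε) * pt g₀ b + ε * pt g₁ b with ha'
        clear_value a'
        have ha'stoch : IsStoch a' := by
          constructor
          · intro b
            rw [ha']
            have := pt_nonneg g₀ b
            have := pt_nonneg g₁ b
            have h1 : (0:ℝ) ≤ 1 - ε := by linarith
            positivity
          · rw [ha']
            rw [Finset.sum_add_distrib, ← Finset.mul_sum, ← Finset.mul_sum, pt_sum, pt_sum]
            ring
        have hsc : SingleCrossingOn (fun t => phiA φ (pt f) t - phiA φ a' t) (Set.Icc t0 t1) :=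
          hscd (pt f) a' (isStoch_pt f) ha'stoch
        have hDapp : ∀ x, phiA φ (pt f) x - phiA φ a' x = (1 - ε) * e x + ε * d x := by
          intro x
          rw [phiA_pt, ha', phiA_mix, he_app x, hd_app x]
          ring
        have hD0 : 0 < phiA φ (pt f) t0 - phiA φ a' t0 := by
          rw [hDapp t0]
          have hrw : (1 - ε) * e t0 + ε * d t0 = e t0 - ε * (e t0 - d t0) := by ring
          rw [hrw, hεd]
          linarith
        have hDv : phiA φ (pt f) v - phiA φ a' v ≤ 0 := by
          rw [hDapp v, hev]
          have : ε * d v ≤ 0 := mul_nonpos_of_nonneg_of_nonpos hε0.le hdv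
          linarith
        have hDt' : 0 < phiA φ (pt f) t' - phiA φ a' t' := by
          rw [hDapp t', hets0]
          have := mul_pos hε0 hdts
          linarith
        exact lemA hsc ht0I hvI ht'I ht0v.le hvt' hD0 hDv hDt'

/-- **Corollary 1.** Under Assumption SCD*, there exists a bundle that is a strict best
response: at some type its virtual value strictly exceeds that of every other bundle. -/
theorem stmt4 {n : ℕ} (hn : 1 ≤ n) (t0 t1 : ℝ) (ht : t0 < t1)
    (φ : Bundle n → ℝ → ℝ)
    (hcont : ∀ b : Bundle n, ContinuousOn (φ b) (Set.Icc t0 t1))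
    (hdist : Distinct φ t0 t1)
    (hscd : SCDstar φ t0 t1) :
    ∃ b : Bundle n, ∃ t ∈ Set.Icc t0 t1, ∀ b' : Bundle n, b' ≠ b → φ b' t < φ b t := by
  classical
  obtain ⟨b, -, t, htI, h⟩ :=
    exists_strict_aux ht.le hcont hdist hscd (Finset.univ.card) Finset.univ le_rfl
      ⟨∅, Finset.mem_univ _⟩
  exact ⟨b, t, htI, fun b' hb' => h b' (Finset.mem_univ _) hb'⟩

end Paper
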